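/- For u ∈ ℂ, u ≠ 0, and D ∈ {1, −1}, define 4×4 complex matrices A = [[1, −(D⁻²+D⁻¹+1), (D⁻²+D⁻¹+1)u, −u], [0, −1, (D⁻¹+1)u, −u], [0, 0, u, −u], [0, 0, 0, −u]] and B = [[−u, 0, 0, 0], [−u, u, 0, 0], [−D, D+1, −1, 0], [−D³, D³+D²+D, −D²−D−1, 1]]. If either (D = 1 and u is a primitive 5th root of unity) or (D = −1 and u is a primitive 10th root of unity), then the subgroup of GL(4,ℂ) generated by A and B is infinite. -/

import Mathlib

/-!
If the group were finite, `W = A⁴B⁴` would have finite order, so its eigenvalues would be roots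
of unity and `‖tr W‖ ≤ 4`. The entries of `W` are polynomials over `ℚ` in `u`, so the same
holds with `u` replaced by any Galois conjugate, i.e. any primitive root of unity of the same
order.
For `D = 1` the product of `tr W` over the four primitive fifth roots of unity is the rational
integer `1936 > 4⁴`, so one of them violates the bound. The case `D = -1` reduces to this one:
`tr W` at `(v, -1)` equals `tr W` at `(-v, 1)`, and `v ↦ -v` exchanges primitive fifth and
primitive tenth roots of unity.
-/

/-- The `A` matrix of the 4-dimensional Tuba–Wenzl representation, normalized with
eigenvalues `{±u, ±1}`. -/
noncomputable def twA (u D : ℂ) : Matrix (Fin 4) (Fin 4) ℂ :=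
  !![1, -(D⁻¹ ^ 2 + D⁻¹ + 1), (D⁻¹ ^ 2 + D⁻¹ + 1) * u, -u;
     0, -1, (D⁻¹ + 1) * u, -u;
     0, 0, u, -u;
     0, 0, 0, -u]

/-- The `B` matrix of the 4-dimensional Tuba–Wenzl representation. -/
def twB (u D : ℂ) : Matrix (Fin 4) (Fin 4) ℂ :=
  !![-u, 0, 0, 0;
     -u, u, 0, 0;
     -D, D + 1, -1, 0;
     -D ^ 3, D ^ 3 + D ^ 2 + D, -D ^ 2 - D - 1, 1]

/-- The subgroup of `GL(4, ℂ)` generated by the (invertible) matrices `A` and `B`. -/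
def matGenGroup (A B : Matrix (Fin 4) (Fin 4) ℂ) :
    Subgroup (Matrix (Fin 4) (Fin 4) ℂ)ˣ :=
  Subgroup.closure {g : (Matrix (Fin 4) (Fin 4) ℂ)ˣ |
    (g : Matrix (Fin 4) (Fin 4) ℂ) = A ∨ (g : Matrix (Fin 4) (Fin 4) ℂ) = B}

open Polynomial

theorem pow_four_eq_sq_sq {M : Type*} [Monoid M] (a : M) : a ^ 4 = (a ^ 2) ^ 2 := by
  rw [← pow_mul]

theorem Matrix.norm_trace_le_of_isOfFinOrder {n : Type*} [Fintype n] [DecidableEq n]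
    {M : Matrix n n ℂ} (hM : IsOfFinOrder M) : ‖M.trace‖ ≤ Fintype.card n := by
  obtain ⟨k, hk, hMk⟩ := hM.exists_pow_eq_one
  have hroots : ∀ x ∈ M.charpoly.roots, ‖x‖ = 1 := by
    intro x hx
    have hxM : x ∈ spectrum ℂ M :=
      Matrix.mem_spectrum_iff_isRoot_charpoly.mpr (isRoot_of_mem_roots hx)
    have : Nontrivial (Matrix n n ℂ) := by
      by_contra h
      rw [not_nontrivial_iff_subsingleton] at h
      simp [spectrum.of_subsingleton] at hxM
    have hxk : x ^ k ∈ spectrum ℂ (M ^ k) := spectrum.pow_image_subset M k ⟨x, hxM, rfl⟩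
    rw [hMk, spectrum.one_eq, Set.mem_singleton_iff] at hxk
    exact Complex.norm_eq_one_of_pow_eq_one hxk hk.ne'
  rw [Matrix.trace_eq_sum_roots_charpoly]
  calc ‖M.charpoly.roots.sum‖ ≤ (M.charpoly.roots.map norm).sum := norm_multiset_sum_le _
    _ = Fintype.card n := by
      rw [Multiset.map_congr rfl hroots, Multiset.map_const', Multiset.sum_replicate,
        IsAlgClosed.card_roots_eq_natDegree, Matrix.charpoly_natDegree_eq_dim, nsmul_one]

theorem IsPrimitiveRoot.neg_of_odd {R : Type*} [CommRing R] [Nontrivial R] {ζ : R} {n : ℕ}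
    (hζ : IsPrimitiveRoot ζ n) (hn : Odd n) (hR : ringChar R ≠ 2) :
    IsPrimitiveRoot (-ζ) (2 * n) := by
  convert IsPrimitiveRoot.orderOf (-ζ)
  rw [neg_eq_neg_one_mul, (Commute.all _ _).orderOf_mul_eq_mul_orderOf_of_coprime] <;>
    rw [orderOf_neg_one, if_neg hR, ← hζ.eq_orderOf]
  exact Nat.coprime_two_left.mpr hn

theorem IsPrimitiveRoot.aeval_eq_zero {K : Type*} [Field K] [CharZero K] {n : ℕ} (hn : 0 < n)
    {u v : K} (hu : IsPrimitiveRoot u n) (hv : IsPrimitiveRoot v n) {p : ℚ[X]}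
    (hp : aeval u p = 0) : aeval v p = 0 := by
  obtain ⟨q, rfl⟩ := minpoly.dvd ℚ u hp
  have hcyc : aeval v (cyclotomic n ℚ) = 0 := by
    simpa [aeval_def, eval₂_eq_eval_map, map_cyclotomic] using hv.isRoot_cyclotomic hn
  rw [map_mul, ← cyclotomic_eq_minpoly_rat hu hn, hcyc, zero_mul]

theorem IsPrimitiveRoot.isOfFinOrder_mapMatrix_aeval {K : Type*} [Field K] [CharZero K]
    {ι : Type*} [Fintype ι] [DecidableEq ι] {n : ℕ} (hn : 0 < n) {u v : K}
    (hu : IsPrimitiveRoot u n) (hv : IsPrimitiveRoot v n) {P : Matrix ι ι ℚ[X]}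
    (hP : IsOfFinOrder ((aeval u).mapMatrix P)) : IsOfFinOrder ((aeval v).mapMatrix P) := by
  obtain ⟨k, hk, hPk⟩ := hP.exists_pow_eq_one
  refine isOfFinOrder_iff_pow_eq_one.mpr ⟨k, hk, ?_⟩
  have hmap (w : K) : (aeval w).mapMatrix (P ^ k - 1) = (aeval w).mapMatrix P ^ k - 1 := by
    rw [map_sub, map_pow, map_one]
  rw [← sub_eq_zero, ← hmap] at hPk ⊢
  ext i j
  have hij := congrFun₂ hPk i j
  simp only [AlgHom.mapMatrix_apply, Matrix.map_apply, Matrix.zero_apply] at hij ⊢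
  exact hu.aeval_eq_zero hn hv hij

theorem isOfFinOrder_pow_mul_pow_of_finite {A B : Matrix (Fin 4) (Fin 4) ℂ} (hA : IsUnit A)
    (hB : IsUnit B) (hfin : (matGenGroup A B : Set (Matrix (Fin 4) (Fin 4) ℂ)ˣ).Finite)
    (m n : ℕ) : IsOfFinOrder (A ^ m * B ^ n) := by
  have : Finite (matGenGroup A B) := hfin.to_subtype
  have hAmem : hA.unit ∈ matGenGroup A B := Subgroup.subset_closure (Or.inl hA.unit_spec)
  have hBmem : hB.unit ∈ matGenGroup A B := Subgroup.subset_closure (Or.inr hB.unit_spec)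
  have hfo : IsOfFinOrder
      (⟨_, mul_mem (pow_mem hAmem m) (pow_mem hBmem n)⟩ : matGenGroup A B) :=
    isOfFinOrder_of_finite _
  simpa using ((Units.coeHom _).comp (matGenGroup A B).subtype).isOfFinOrder hfo

theorem det_twA (u D : ℂ) : (twA u D).det = u ^ 2 := by
  rw [Matrix.det_of_isUpperTriangular, Fin.prod_univ_four]
  · simp [twA, sq]
  · intro i j hij
    fin_cases i <;> fin_cases j <;> first | rfl | exact absurd hij (by decide)

theorem det_twB (u D : ℂ) : (twB u D).det = u ^ 2 := by
  rw [Matrix.det_of_isLowerTriangular, Fin.prod_univ_four]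
  · simp [twB, sq]
  · intro i j hij
    fin_cases i <;> fin_cases j <;> first | rfl | exact absurd hij (by decide)

noncomputable def twAPoly (D : ℚ) : Matrix (Fin 4) (Fin 4) ℚ[X] :=
  !![1, -C (D⁻¹ ^ 2 + D⁻¹ + 1), C (D⁻¹ ^ 2 + D⁻¹ + 1) * X, -X;
     0, -1, C (D⁻¹ + 1) * X, -X;
     0, 0, X, -X;
     0, 0, 0, -X]

noncomputable def twBPoly (D : ℚ) : Matrix (Fin 4) (Fin 4) ℚ[X] :=
  !![-X, 0, 0, 0;
     -X, X, 0, 0;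
     -C D, C (D + 1), -1, 0;
     -C (D ^ 3), C (D ^ 3 + D ^ 2 + D), -C (D ^ 2 + D + 1), 1]

theorem mapMatrix_aeval_twAPoly (u : ℂ) (D : ℚ) :
    (aeval u).mapMatrix (twAPoly D) = twA u D := by
  ext i j
  fin_cases i <;> fin_cases j <;> simp [twAPoly, twA]

theorem mapMatrix_aeval_twBPoly (u : ℂ) (D : ℚ) :
    (aeval u).mapMatrix (twBPoly D) = twB u D := by
  ext i j
  fin_cases i <;> fin_cases j <;> simp [twBPoly, twB]; ring

noncomputable def twWord (u D : ℂ) : Matrix (Fin 4) (Fin 4) ℂ := twA u D ^ 4 * twB u D ^ 4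

theorem isOfFinOrder_twWord_of_isPrimitiveRoot (D : ℚ) {n : ℕ} (hn : 0 < n) {u v : ℂ}
    (hu : IsPrimitiveRoot u n) (hv : IsPrimitiveRoot v n) (h : IsOfFinOrder (twWord u D)) :
    IsOfFinOrder (twWord v D) := by
  have hmap (w : ℂ) : (aeval w).mapMatrix (twAPoly D ^ 4 * twBPoly D ^ 4) = twWord w D := by
    rw [map_mul, map_pow, map_pow, mapMatrix_aeval_twAPoly, mapMatrix_aeval_twBPoly, twWord]
  rw [← hmap] at h ⊢
  exact hu.isOfFinOrder_mapMatrix_aeval hn hv h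

theorem trace_twWord_one (v : ℂ) :
    (twWord v 1).trace =
      2 * v - 4 * v ^ 2 + 6 * v ^ 3 - 4 * v ^ 4 + 6 * v ^ 5 - 4 * v ^ 6 + 2 * v ^ 7 := by
  have hA : twA v 1 ^ 2 =
      !![1, 0, -3 * v + 3 * v ^ 2, 2 * v - 2 * v ^ 2;
         0, 1, -2 * v + 2 * v ^ 2, v - v ^ 2;
         0, 0, v ^ 2, 0;
         0, 0, 0, v ^ 2] := by
    ext i j
    fin_cases i <;> fin_cases j <;> simp [twA, sq, Matrix.mul_apply, Fin.sum_univ_four] <;> ring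
  have hB : twB v 1 ^ 2 =
      !![v ^ 2, 0, 0, 0;
         0, v ^ 2, 0, 0;
         1 - v, -2 + 2 * v, 1, 0;
         2 - 2 * v, -3 + 3 * v, 0, 1] := by
    ext i j
    fin_cases i <;> fin_cases j <;> simp [twB, sq, Matrix.mul_apply, Fin.sum_univ_four] <;> ring
  rw [twWord, pow_four_eq_sq_sq, pow_four_eq_sq_sq, hA, hB]
  simp only [Matrix.trace, Matrix.diag, sq, Matrix.mul_apply, Fin.sum_univ_four, Matrix.of_apply,
    Matrix.cons_val', Matrix.cons_val_zero, Matrix.cons_val_one, Matrix.cons_val,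
    Matrix.cons_val_fin_one]
  ring

theorem trace_twWord_neg_one (v : ℂ) : (twWord v (-1)).trace = (twWord (-v) 1).trace := by
  have hA : twA v (-1) ^ 2 =
      !![1, 0, v + v ^ 2, 0;
         0, 1, 0, v + v ^ 2;
         0, 0, v ^ 2, 0;
         0, 0, 0, v ^ 2] := by
    ext i j
    fin_cases i <;> fin_cases j <;> simp [twA, sq, Matrix.mul_apply, Fin.sum_univ_four]
  have hB : twB v (-1) ^ 2 =
      !![v ^ 2, 0, 0, 0;
         0, v ^ 2, 0, 0;
         -1 - v, 0, 1, 0;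
         0, -1 - v, 0, 1] := by
    ext i j
    fin_cases i <;> fin_cases j <;> simp [twB, sq, Matrix.mul_apply, Fin.sum_univ_four] <;> ring
  rw [trace_twWord_one, twWord, pow_four_eq_sq_sq, pow_four_eq_sq_sq, hA, hB]
  simp only [Matrix.trace, Matrix.diag, sq, Matrix.mul_apply, Fin.sum_univ_four, Matrix.of_apply,
    Matrix.cons_val', Matrix.cons_val_zero, Matrix.cons_val_one, Matrix.cons_val,
    Matrix.cons_val_fin_one]
  ring

theorem exists_isPrimitiveRoot_four_lt_norm_trace_twWord :
    ∃ v : ℂ, IsPrimitiveRoot v 5 ∧ 4 < ‖(twWord v 1).trace‖ := by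
  obtain ⟨ζ, hζ⟩ : ∃ ζ : ℂ, IsPrimitiveRoot ζ 5 :=
    ⟨_, Complex.isPrimitiveRoot_exp 5 (by norm_num)⟩
  by_contra! hle
  have hconj (j : ℕ) (hj : j.Coprime 5) : ‖(twWord (ζ ^ j) 1).trace‖ ≤ 4 :=
    hle _ (hζ.pow_of_coprime j hj)
  have hΦ : 1 + ζ + ζ ^ 2 + ζ ^ 3 + ζ ^ 4 = 0 := by
    simpa [Finset.sum_range_succ] using hζ.geom_sum_eq_zero (by norm_num)
  have hnorm : (twWord ζ 1).trace * (twWord (ζ ^ 2) 1).trace * (twWord (ζ ^ 3) 1).trace *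
      (twWord (ζ ^ 4) 1).trace = 1936 := by
    simp only [trace_twWord_one]
    grind
  have : (1936 : ℝ) ≤ 4 * 4 * 4 * 4 :=
    calc (1936 : ℝ)
        = ‖(twWord ζ 1).trace * (twWord (ζ ^ 2) 1).trace * (twWord (ζ ^ 3) 1).trace *
            (twWord (ζ ^ 4) 1).trace‖ := by rw [hnorm]; norm_num
      _ ≤ 4 * 4 * 4 * 4 := by
        simp only [norm_mul]
        gcongr
        exacts [by simpa using hconj 1 (by norm_num), hconj 2 (by norm_num),
          hconj 3 (by norm_num), hconj 4 (by norm_num)]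
  norm_num at this

theorem stmt9_general (u D : ℂ) (hu : u ≠ 0)
    (h : (D = 1 ∧ IsPrimitiveRoot u 5) ∨ (D = -1 ∧ IsPrimitiveRoot u 10)) :
    Set.Infinite (matGenGroup (twA u D) (twB u D) : Set (Matrix (Fin 4) (Fin 4) ℂ)ˣ) := by
  intro hfin
  have hunit : IsUnit (u ^ 2) := (Ne.isUnit hu).pow 2
  have hW : IsOfFinOrder (twWord u D) := isOfFinOrder_pow_mul_pow_of_finite
    ((twA u D).isUnit_iff_isUnit_det.mpr (det_twA u D ▸ hunit))
    ((twB u D).isUnit_iff_isUnit_det.mpr (det_twB u D ▸ hunit)) hfin 4 4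
  obtain ⟨v, hv, hv4⟩ := exists_isPrimitiveRoot_four_lt_norm_trace_twWord
  rcases h with ⟨rfl, hu5⟩ | ⟨rfl, hu10⟩
  · have hWv : IsOfFinOrder (twWord v 1) := by
      simpa using isOfFinOrder_twWord_of_isPrimitiveRoot 1 (by norm_num) hu5 hv (by simpa using hW)
    exact hv4.not_ge (by simpa using Matrix.norm_trace_le_of_isOfFinOrder hWv)
  · have hWv : IsOfFinOrder (twWord (-v) (-1)) := by
      simpa using isOfFinOrder_twWord_of_isPrimitiveRoot (-1) (by norm_num) hu10
        (hv.neg_of_odd (by decide) (by simp)) (by simpa using hW)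
    exact hv4.not_ge
      (by simpa [trace_twWord_neg_one] using Matrix.norm_trace_le_of_isOfFinOrder hWv)

theorem stmt9 (u D : ℂ) (hu : u ≠ 0) (hD : D = 1 ∨ D = -1)
    (h : (D = 1 ∧ IsPrimitiveRoot u 5) ∨ (D = -1 ∧ IsPrimitiveRoot u 10)) :
    Set.Infinite (matGenGroup (twA u D) (twB u D) : Set (Matrix (Fin 4) (Fin 4) ℂ)ˣ) :=
  stmt9_general u D hu h
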